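/- Let (f_n) be a sequence of functions f_n : ℝ → [0,∞) with each f_n increasing on (−∞,0], decreasing on [0,∞), ∫_ℝ f_n = 1, and lim_{n→∞} ∫_{[−δ,δ]} f_n = 1 for all δ > 0. If X ⊆ ℝ is a Borel set with ℓ(X) > 0, then there exists a ∈ X such that, setting g_n(x) = f_n(x − a), one has lim_{n→∞} ∫_X g_n(x) dx = 1. -/

import Mathlib

/-!
Take a Lebesgue density point `a` of `X`, so that `Xᶜ` fills only a fraction `θ → 0` of the balls
`closedBall a r` as `r → 0`. The translates `g n = f n (· - a)` are unimodal about `a`, so each of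
their superlevel sets, cut down to `closedBall a δ`, is an interval through `a` and hence lies in a
ball about `a` of radius at most its length; it therefore meets `Xᶜ` in measure at most `2θ` times
its own. By the layer-cake formula the same bound holds for `∫_{Xᶜ ∩ closedBall a δ} g n`, while
the mass of `g n` outside `closedBall a δ` tends to `0` by concentration. Hence `∫_{Xᶜ} g n → 0`,
i.e. `∫_X g n → 1`.
-/

open MeasureTheory Filter Topology ENNReal Metric Set

structure IsUnimodal {α β : Type*} [Preorder α] [Preorder β] (g : α → β) (c : α) : Prop where
  monotoneOn : MonotoneOn g (Iic c)
  antitoneOn : AntitoneOn g (Ici c)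

namespace IsUnimodal

section Order

variable {α β : Type*} [LinearOrder α] [Preorder β] {g : α → β} {c : α}

theorem le_apply_center (hg : IsUnimodal g c) (x : α) : g x ≤ g c := by
  rcases le_total x c with h | h
  · exact hg.monotoneOn h self_mem_Iic h
  · exact hg.antitoneOn self_mem_Ici h h

theorem ordConnected_setOf_lt (hg : IsUnimodal g c) (t : β) : {x | t < g x}.OrdConnected := by
  refine ⟨fun x hx z hz y hy => ?_⟩
  rcases le_total y c with h | h
  · exact hx.trans_le (hg.monotoneOn (hy.1.trans h) h hy.1)
  · exact hz.trans_le (hg.antitoneOn h (h.trans hy.2) hy.2)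

end Order

theorem comp_sub_right {α β : Type*} [AddCommGroup α] [LinearOrder α] [IsOrderedAddMonoid α]
    [Preorder β] {g : α → β} {c : α} (hg : IsUnimodal g c) (a : α) :
    IsUnimodal (fun x => g (x - a)) (c + a) where
  monotoneOn _ hx _ hy hxy := hg.monotoneOn (sub_le_iff_le_add.2 hx) (sub_le_iff_le_add.2 hy)
    (sub_le_sub_right hxy a)
  antitoneOn _ hx _ hy hxy := hg.antitoneOn (le_sub_iff_add_le.2 hx) (le_sub_iff_add_le.2 hy)
    (sub_le_sub_right hxy a)

theorem measurable {α β : Type*} [TopologicalSpace α] [MeasurableSpace α] [OpensMeasurableSpace α]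
    [LinearOrder α] [OrderClosedTopology α] [TopologicalSpace β] [MeasurableSpace β]
    [BorelSpace β] [LinearOrder β] [OrderTopology β] [SecondCountableTopology β]
    {g : α → β} {c : α} (hg : IsUnimodal g c) : Measurable g :=
  measurable_of_Ioi fun t => (hg.ordConnected_setOf_lt t).measurableSet

end IsUnimodal

theorem Set.OrdConnected.subset_closedBall_toReal_volume {S : Set ℝ} {a : ℝ}
    (hS : S.OrdConnected) (ha : a ∈ S) (hfin : volume S ≠ ∞) :
    S ⊆ closedBall a (volume S).toReal := by
  intro x hx
  rw [mem_closedBall, Real.dist_eq, ← ENNReal.ofReal_le_iff_le_toReal hfin, ← Real.volume_interval]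
  exact measure_mono (hS.uIcc_subset ha hx)

theorem volume_inter_le_of_ordConnected {s S : Set ℝ} {a δ : ℝ} {θ : ℝ≥0∞}
    (hdens : ∀ r ∈ Ioc 0 δ, volume (s ∩ closedBall a r) ≤ θ * volume (closedBall a r))
    (hS : S.OrdConnected) (ha : a ∈ S) (hSδ : S ⊆ closedBall a δ) :
    volume (s ∩ S) ≤ 2 * θ * volume S := by
  have hfin : volume S ≠ ∞ := ((measure_mono hSδ).trans_lt measure_closedBall_lt_top).ne
  set r := min δ (volume S).toReal
  have hSr : S ⊆ closedBall a r := fun x hx => mem_closedBall.2 <|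
    le_min (hSδ hx) (hS.subset_closedBall_toReal_volume ha hfin hx)
  rcases (nonempty_closedBall.1 ⟨a, hSr ha⟩).eq_or_lt with hr | hr
  · calc volume (s ∩ S) ≤ volume (closedBall a r) := measure_mono (inter_subset_right.trans hSr)
      _ = 0 := by simp [← hr]
      _ ≤ _ := zero_le
  · calc volume (s ∩ S) ≤ volume (s ∩ closedBall a r) :=
          measure_mono (inter_subset_inter_right _ hSr)
      _ ≤ θ * volume (closedBall a r) := hdens r ⟨hr, min_le_left _ _⟩
      _ = 2 * θ * ENNReal.ofReal r := by
        rw [Real.volume_closedBall, ENNReal.ofReal_mul zero_le_two, ofReal_ofNat]; ring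
      _ ≤ 2 * θ * volume S := by
        gcongr; exact (ENNReal.ofReal_le_iff_le_toReal hfin).2 (min_le_right _ _)

theorem IsUnimodal.setLIntegral_inter_closedBall_le {g : ℝ → ℝ} {a δ : ℝ} {θ : ℝ≥0∞}
    (hg : IsUnimodal g a) (hg0 : 0 ≤ g) (hδ : 0 ≤ δ) {s : Set ℝ}
    (hdens : ∀ r ∈ Ioc 0 δ, volume (s ∩ closedBall a r) ≤ θ * volume (closedBall a r)) :
    ∫⁻ x in s ∩ closedBall a δ, ENNReal.ofReal (g x)
      ≤ 2 * θ * ∫⁻ x in closedBall a δ, ENNReal.ofReal (g x) := by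
  have hlayer : ∀ t : Set ℝ, ∫⁻ x in t, ENNReal.ofReal (g x)
      = ∫⁻ τ in Ioi 0, volume ({x | τ < g x} ∩ t) := fun t => by
    rw [lintegral_eq_lintegral_meas_lt _ (ae_of_all _ hg0) hg.measurable.aemeasurable]
    simp only [Measure.restrict_apply (hg.ordConnected_setOf_lt _).measurableSet]
  have hanti : Antitone fun τ => volume ({x | τ < g x} ∩ closedBall a δ) :=
    fun τ₁ τ₂ h => measure_mono (inter_subset_inter_left _ fun x hx => h.trans_lt hx)
  rw [hlayer, hlayer, ← lintegral_const_mul'' _ hanti.measurable.aemeasurable]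
  refine lintegral_mono fun τ => ?_
  by_cases hτ : τ < g a
  · rw [← inter_assoc, inter_comm _ s, inter_assoc]
    refine volume_inter_le_of_ordConnected hdens ?_ ⟨hτ, mem_closedBall_self hδ⟩ inter_subset_right
    exact (hg.ordConnected_setOf_lt τ).inter (Real.closedBall_eq_Icc ▸ ordConnected_Icc)
  · have : {x | τ < g x} = ∅ :=
      eq_empty_of_forall_notMem fun x hx => hτ (lt_of_lt_of_le hx (hg.le_apply_center x))
    simp [this]

theorem tendsto_setLIntegral_compl_iff {α ι : Type*} [MeasurableSpace α] {μ : Measure α}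
    {l : Filter ι} {F : ι → α → ℝ≥0∞} {s : Set α} (hF : ∀ i, ∫⁻ x, F i x ∂μ = 1)
    (hs : MeasurableSet s) :
    Tendsto (fun i => ∫⁻ x in sᶜ, F i x ∂μ) l (𝓝 0) ↔
      Tendsto (fun i => ∫⁻ x in s, F i x ∂μ) l (𝓝 1) := by
  have hcompl : ∀ t, MeasurableSet t → ∀ i, ∫⁻ x in tᶜ, F i x ∂μ = 1 - ∫⁻ x in t, F i x ∂μ :=
    fun t ht i => by
      rw [setLIntegral_compl ht, hF i]
      exact ne_top_of_le_ne_top one_ne_top (hF i ▸ setLIntegral_le_lintegral _ _)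
  have hsub : ∀ {u : ι → ℝ≥0∞} {b}, Tendsto u l (𝓝 b) → Tendsto (fun i => 1 - u i) l (𝓝 (1 - b)) :=
    fun h => ENNReal.Tendsto.sub tendsto_const_nhds h (Or.inl one_ne_top)
  have hs' : ∀ i, ∫⁻ x in s, F i x ∂μ = 1 - ∫⁻ x in sᶜ, F i x ∂μ := by
    simpa using hcompl sᶜ hs.compl
  refine ⟨fun h => ?_, fun h => ?_⟩
  · simp_rw [hs']
    simpa using hsub h
  · simp_rw [hcompl s hs]
    simpa using hsub h

theorem tendsto_setLIntegral_nhds_zero_of_density {ι : Type*} {l : Filter ι} {g : ι → ℝ → ℝ}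
    {a : ℝ} {s : Set ℝ} (hg : ∀ i, IsUnimodal (g i) a) (hg0 : ∀ i, 0 ≤ g i)
    (hmass : ∀ i, ∫⁻ x, ENNReal.ofReal (g i x) = 1)
    (hconc : ∀ δ > 0, Tendsto (fun i => ∫⁻ x in closedBall a δ, ENNReal.ofReal (g i x)) l (𝓝 1))
    (hdens : Tendsto (fun r => volume (s ∩ closedBall a r) / volume (closedBall a r))
      (𝓝[>] 0) (𝓝 0)) :
    Tendsto (fun i => ∫⁻ x in s, ENNReal.ofReal (g i x)) l (𝓝 0) := by
  refine ENNReal.tendsto_nhds_zero.2 fun ε hε => ?_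
  set θ := ε / 3
  have hθ : 0 < θ := ENNReal.div_pos hε.ne' ofNat_ne_top
  obtain ⟨δ, hδ, hball⟩ : ∃ δ > 0, ∀ r ∈ Ioc 0 δ,
      volume (s ∩ closedBall a r) ≤ θ * volume (closedBall a r) := by
    obtain ⟨δ, hδ, hsub⟩ := mem_nhdsGT_iff_exists_Ioc_subset.1 (hdens (Iio_mem_nhds hθ))
    refine ⟨δ, hδ, fun r hr => (ENNReal.div_le_iff ?_ measure_closedBall_lt_top.ne).1 (hsub hr).le⟩
    simp [Real.volume_closedBall, hr.1]
  have htail := ENNReal.tendsto_nhds_zero.1 ((tendsto_setLIntegral_compl_iff hmass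
    isClosed_closedBall.measurableSet).2 (hconc δ hδ)) θ hθ
  filter_upwards [htail] with i hi
  calc ∫⁻ x in s, ENNReal.ofReal (g i x)
      ≤ (∫⁻ x in s ∩ closedBall a δ, ENNReal.ofReal (g i x))
        + ∫⁻ x in (closedBall a δ)ᶜ, ENNReal.ofReal (g i x) :=
        (lintegral_mono_set fun x hx => (em (x ∈ closedBall a δ)).imp (⟨hx, ·⟩) id).trans
          (lintegral_union_le _ _ _)
    _ ≤ 2 * θ * (∫⁻ x in closedBall a δ, ENNReal.ofReal (g i x)) + θ :=
        add_le_add ((hg i).setLIntegral_inter_closedBall_le (hg0 i) hδ.le hball) hi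
    _ ≤ 2 * θ * 1 + θ := by gcongr; exact hmass i ▸ setLIntegral_le_lintegral _ _
    _ = 3 * θ := by ring
    _ = ε := ENNReal.mul_div_cancel three_ne_zero ofNat_ne_top

theorem exists_mem_tendsto_measure_compl_inter_div {β : Type*} [MetricSpace β]
    [MeasurableSpace β] [BorelSpace β] [SecondCountableTopology β] [HasBesicovitchCovering β]
    {μ : Measure β} [IsLocallyFiniteMeasure μ] {X : Set β} (hX : MeasurableSet X) (hμX : μ X ≠ 0) :
    ∃ a ∈ X, Tendsto (fun r => μ (Xᶜ ∩ closedBall a r) / μ (closedBall a r)) (𝓝[>] 0) (𝓝 0) := by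
  have := ae_restrict_neBot.2 hμX
  obtain ⟨a, haX, ha⟩ := ((ae_restrict_mem hX).and (ae_restrict_of_ae
    (Besicovitch.ae_tendsto_measure_inter_div_of_measurableSet μ hX.compl))).exists
  exact ⟨a, haX, by simpa [haX] using ha⟩

theorem setLIntegral_closedBall_comp_sub_right (f : ℝ → ℝ≥0∞) (a δ : ℝ) :
    ∫⁻ x in closedBall a δ, f (x - a) = ∫⁻ x in Icc (-δ) δ, f x := by
  have hpre : (· - a) ⁻¹' Icc (-δ) δ = closedBall a δ := by
    ext x; simp [Real.closedBall_eq_Icc, sub_eq_add_neg, add_comm]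
  rw [← hpre, (measurePreserving_sub_right volume a).setLIntegral_comp_preimage_emb
    (MeasurableEquiv.subRight a).measurableEmbedding]

theorem stmt3 (f : ℕ → ℝ → ℝ) (hpos : ∀ n x, 0 ≤ f n x)
    (hmono₁ : ∀ n, ∀ x y : ℝ, x ≤ y → y ≤ 0 → f n x ≤ f n y)
    (hmono₂ : ∀ n, ∀ x y : ℝ, 0 ≤ x → x ≤ y → f n y ≤ f n x)
    (hint : ∀ n, ∫ x : ℝ, f n x = 1)
    (hconc : ∀ δ : ℝ, 0 < δ →
      Tendsto (fun n => ∫ x in Set.Icc (-δ) δ, f n x) atTop (𝓝 1))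
    (X : Set ℝ) (hX : MeasurableSet X) (hpos' : 0 < volume X) :
    ∃ a ∈ X, Tendsto (fun n => ∫ x in X, f n (x - a)) atTop (𝓝 1) := by
  have hinteg : ∀ n, Integrable (f n) := fun n => .of_integral_ne_zero (by simp [hint n])
  have hofReal : ∀ n (s : Set ℝ), ENNReal.ofReal (∫ x in s, f n x)
      = ∫⁻ x in s, ENNReal.ofReal (f n x) := fun n s =>
    ofReal_integral_eq_lintegral_ofReal (hinteg n).integrableOn (ae_of_all _ (hpos n))
  obtain ⟨a, haX, hdens⟩ := exists_mem_tendsto_measure_compl_inter_div hX hpos'.ne'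
  refine ⟨a, haX, ?_⟩
  have hunimodal : ∀ n, IsUnimodal (fun x => f n (x - a)) a := fun n => by
    simpa using (⟨fun x _ y hy hxy => hmono₁ n x y hxy hy,
      fun x hx y _ hxy => hmono₂ n x y hx hxy⟩ : IsUnimodal (f n) 0).comp_sub_right a
  have hmass : ∀ n, ∫⁻ x, ENNReal.ofReal (f n (x - a)) = 1 := fun n => by
    rw [lintegral_sub_right_eq_self (fun x => ENNReal.ofReal (f n x)), ← setLIntegral_univ,
      ← hofReal, setIntegral_univ, hint n, ofReal_one]
  have hconcBall : ∀ δ > 0, Tendsto (fun n => ∫⁻ x in closedBall a δ, ENNReal.ofReal (f n (x - a)))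
      atTop (𝓝 1) := fun δ hδ => by
    have hball : ∀ n, ∫⁻ x in closedBall a δ, ENNReal.ofReal (f n (x - a))
        = ENNReal.ofReal (∫ x in Icc (-δ) δ, f n x) := fun n =>
      (setLIntegral_closedBall_comp_sub_right _ a δ).trans (hofReal n _).symm
    simpa only [hball, ENNReal.ofReal_one] using ENNReal.tendsto_ofReal (hconc δ hδ)
  have hlim := (tendsto_setLIntegral_compl_iff hmass hX).1
    (tendsto_setLIntegral_nhds_zero_of_density hunimodal (fun n x => hpos n _)
      hmass hconcBall hdens)
  have htoReal : ∀ n, ∫ x in X, f n (x - a) = (∫⁻ x in X, ENNReal.ofReal (f n (x - a))).toReal :=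
    fun n => integral_eq_lintegral_of_nonneg_ae (ae_of_all _ fun x => hpos n _)
      ((hinteg n).comp_sub_right a).aestronglyMeasurable.restrict
  simp only [htoReal]
  exact (ENNReal.tendsto_toReal one_ne_top).comp hlim
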